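/- arXiv:2212.04723 — 6 statements merged into one kernel-verified Lean document; each statement's English description precedes it below -/
import Mathlib

section
/- With k(y) = 1 − y² + (2/(p+1))(y^{p+1} − 1), the identity (k'(y))² − 2k(y)k''(y) = −4p(p−1)∫₁^y t^{p-2} k(t) dt holds for all y > 0. -/
/-!
For `F = (k')² - 2 k k''` the terms `2 k' k''` cancel in `F'`, leaving `F' = -2 k k'''` with
`k''' (t) = 2 p (p - 1) t ^ (p - 2)`. As `k (1) = k' (1) = 0`, also `F (1) = 0`, and the identity
is the fundamental theorem of calculus for `F` on `[1, y]`, which stays away from `0`.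
-/

open Real intervalIntegral

theorem HasDerivAt.sq_sub_two_mul_mul {f f₁ f₂ : ℝ → ℝ} {f₃ x : ℝ}
    (h₀ : HasDerivAt f (f₁ x) x) (h₁ : HasDerivAt f₁ (f₂ x) x) (h₂ : HasDerivAt f₂ f₃ x) :
    HasDerivAt (fun y => f₁ y ^ 2 - 2 * f y * f₂ y) (-2 * f x * f₃) x :=
  ((h₁.pow 2).sub ((h₀.const_mul 2).mul h₂)).congr_deriv (by push_cast; ring)

section

variable {p y : ℝ}

theorem hasDerivAt_k (hp : p + 1 ≠ 0) (hy : y ≠ 0) :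
    HasDerivAt (fun t => 1 - t ^ 2 + 2 / (p + 1) * (t ^ (p + 1) - 1)) (2 * (y ^ p - y)) y :=
  (((hasDerivAt_pow 2 y).const_sub 1).add
      (((hasDerivAt_rpow_const (p := p + 1) (Or.inl hy)).sub_const 1).const_mul (2 / (p + 1))))
    |>.congr_deriv (by field_simp; norm_num; ring)

theorem hasDerivAt_k_deriv (hy : y ≠ 0) :
    HasDerivAt (fun t => 2 * (t ^ p - t)) (2 * (p * y ^ (p - 1) - 1)) y :=
  ((hasDerivAt_rpow_const (Or.inl hy)).sub (hasDerivAt_id y)).const_mul 2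

theorem hasDerivAt_k_deriv_deriv (hy : y ≠ 0) :
    HasDerivAt (fun t => 2 * (p * t ^ (p - 1) - 1)) (2 * p * (p - 1) * y ^ (p - 2)) y :=
  (((hasDerivAt_rpow_const (p := p - 1) (Or.inl hy)).const_mul p).sub_const 1).const_mul 2
    |>.congr_deriv (by ring_nf)

end

theorem k_identity (p : ℝ) (hp : 1 < p)
    (k : ℝ → ℝ)
    (hk : ∀ y : ℝ, k y = 1 - y ^ 2 + (2 / (p + 1)) * (y ^ (p + 1) - 1)) :
    ∀ y : ℝ, 0 < y →
      (2 * (y ^ p - y)) ^ 2 - 2 * k y * (2 * (p * y ^ (p - 1) - 1)) =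
        -4 * p * (p - 1) * ∫ t in (1 : ℝ)..y, t ^ (p - 2) * k t := by
  intro y hy
  have hne : ∀ t ∈ Set.uIcc 1 y, t ≠ 0 := fun t ht => by
    rcases Set.mem_uIcc.mp ht with h | h <;> linarith [h.1]
  have hk' {t : ℝ} (ht : t ≠ 0) : HasDerivAt k (2 * (t ^ p - t)) t :=
    funext hk ▸ hasDerivAt_k (by linarith) ht
  have hF : ∀ t ∈ Set.uIcc 1 y, HasDerivAt
      (fun t => (2 * (t ^ p - t)) ^ 2 - 2 * k t * (2 * (p * t ^ (p - 1) - 1)))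
      (-4 * p * (p - 1) * (t ^ (p - 2) * k t)) t := fun t ht =>
    ((hk' (hne t ht)).sq_sub_two_mul_mul (hasDerivAt_k_deriv (hne t ht))
      (hasDerivAt_k_deriv_deriv (hne t ht))).congr_deriv (by ring)
  have hcont : ContinuousOn (fun t => -4 * p * (p - 1) * (t ^ (p - 2) * k t)) (Set.uIcc 1 y) :=
    fun t ht => (((continuousAt_rpow_const t _ (Or.inl (hne t ht))).mul
      (hk' (hne t ht)).continuousAt).const_mul _).continuousWithinAt
  rw [← integral_const_mul, integral_eq_sub_of_hasDerivAt hF hcont.intervalIntegrable, hk 1]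
  norm_num
end

section
/- Define Φ(y) = 3 y^{2−p} k''(y) ∫₁^y t^{p-2} k(t) dt − k(y) k'(y) with k(y) = 1 − y² + (2/(p+1))(y^{p+1} − 1). Then for p ≥ 2, Φ'(y) = (6(p−2)y^{1−p} + 2p(2p+1)) ∫₁^y t^{p-2} k(t) dt for all y > 0. -/
open Real intervalIntegral

/-!
Write `I(y) = ∫₁^y t^{p-2} k(t) dt`. By the product rule and `I' = y^{p-2} k`,
`Φ' = (3 y^{2-p} k'')' I + 3 k k'' - (k'² + k k'') = (6p + 6(p-2) y^{1-p}) I + (2 k k'' - k'²)`.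
The last bracket has derivative `2 k k''' = 4p(p-1) y^{p-2} k` and vanishes at `y = 1`
(where `k = k' = 0`), so it equals `4p(p-1) I`, and `6p + 4p(p-1) = 2p(2p+1)`.
-/

open Set

theorem hasDerivAt_two_mul_mul_sub_sq {𝕜 : Type*} [NontriviallyNormedField 𝕜]
    {f f₁ f₂ : 𝕜 → 𝕜} {f₃ x : 𝕜} (hf : HasDerivAt f (f₁ x) x) (hf₁ : HasDerivAt f₁ (f₂ x) x)
    (hf₂ : HasDerivAt f₂ f₃ x) :
    HasDerivAt (fun y => 2 * f y * f₂ y - f₁ y ^ 2) (2 * f x * f₃) x := by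
  refine (((hf.const_mul 2).mul hf₂).sub (hf₁.pow 2)).congr_deriv ?_
  ring

theorem hasDerivAt_integral_of_continuousOn {E : Type*} [NormedAddCommGroup E] [NormedSpace ℝ E]
    [CompleteSpace E] {f : ℝ → E} {s : Set ℝ} {a b : ℝ} (hs : IsOpen s) (hf : ContinuousOn f s)
    (hab : uIcc a b ⊆ s) : HasDerivAt (fun u => ∫ x in a..u, f x) (f b) b :=
  have hb : b ∈ s := hab right_mem_uIcc
  integral_hasDerivAt_right ((hf.mono hab).intervalIntegrable)
    (hf.stronglyMeasurableAtFilter hs b hb) (hf.continuousAt (hs.mem_nhds hb))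

theorem uIcc_one_subset_Ioi_zero {y : ℝ} (hy : 0 < y) : uIcc 1 y ⊆ Ioi 0 :=
  fun _ ht => lt_of_lt_of_le (lt_min one_pos hy) ht.1

noncomputable def kProfile (p y : ℝ) : ℝ := 1 - y ^ 2 + (2 / (p + 1)) * (y ^ (p + 1) - 1)

section kProfile

variable {p y : ℝ}

theorem hasDerivAt_kProfile (hp : p ≠ -1) (hy : y ≠ 0) :
    HasDerivAt (kProfile p) (2 * (y ^ p - y)) y := by
  have hp' : p + 1 ≠ 0 := fun h => hp (by linarith)
  refine (((hasDerivAt_pow 2 y).const_sub 1).add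
    (((hasDerivAt_rpow_const (p := p + 1) (Or.inl hy)).sub_const 1).const_mul
      (2 / (p + 1)))).congr_deriv ?_
  rw [add_sub_cancel_right]
  field_simp
  ring

theorem hasDerivAt_kProfile_deriv (hy : y ≠ 0) :
    HasDerivAt (fun y => 2 * (y ^ p - y)) (2 * (p * y ^ (p - 1) - 1)) y :=
  ((hasDerivAt_rpow_const (Or.inl hy)).sub (hasDerivAt_id y)).const_mul 2

theorem hasDerivAt_kProfile_deriv2 (hy : y ≠ 0) :
    HasDerivAt (fun y => 2 * (p * y ^ (p - 1) - 1)) (2 * p * (p - 1) * y ^ (p - 2)) y := by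
  refine ((((hasDerivAt_rpow_const (p := p - 1) (Or.inl hy)).const_mul p).sub_const 1).const_mul
    2).congr_deriv ?_
  rw [sub_sub, one_add_one_eq_two]
  ring

theorem continuousOn_rpow_mul_kProfile (hp : p ≠ -1) :
    ContinuousOn (fun t => t ^ (p - 2) * kProfile p t) (Ioi 0) := fun _ ht =>
  ((continuousAt_rpow_const _ _ (Or.inl (ne_of_gt ht))).mul
    (hasDerivAt_kProfile hp (ne_of_gt ht)).continuousAt).continuousWithinAt

theorem two_mul_kProfile_mul_sub_sq (hp : p ≠ -1) (hy : 0 < y) :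
    2 * kProfile p y * (2 * (p * y ^ (p - 1) - 1)) - (2 * (y ^ p - y)) ^ 2
      = 4 * p * (p - 1) * ∫ t in (1 : ℝ)..y, t ^ (p - 2) * kProfile p t := by
  have hderiv : ∀ t ∈ uIcc 1 y, HasDerivAt
      (fun t => 2 * kProfile p t * (2 * (p * t ^ (p - 1) - 1)) - (2 * (t ^ p - t)) ^ 2)
      (4 * p * (p - 1) * (t ^ (p - 2) * kProfile p t)) t := fun t ht => by
    have ht : t ≠ 0 := ne_of_gt (uIcc_one_subset_Ioi_zero hy ht)
    refine (hasDerivAt_two_mul_mul_sub_sq (hasDerivAt_kProfile hp ht)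
      (hasDerivAt_kProfile_deriv ht) (hasDerivAt_kProfile_deriv2 ht)).congr_deriv ?_
    ring
  have hint : IntervalIntegrable (fun t => t ^ (p - 2) * kProfile p t) MeasureTheory.volume 1 y :=
    ((continuousOn_rpow_mul_kProfile hp).mono (uIcc_one_subset_Ioi_zero hy)).intervalIntegrable
  rw [← integral_const_mul, integral_eq_sub_of_hasDerivAt hderiv (hint.const_mul _)]
  simp [kProfile]

theorem hasDerivAt_rpow_mul_kProfile_deriv2 (hy : 0 < y) :
    HasDerivAt (fun y => 3 * y ^ (2 - p) * (2 * (p * y ^ (p - 1) - 1)))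
      (6 * (p - 2) * y ^ (1 - p) + 6 * p) y := by
  refine (((hasDerivAt_rpow_const (p := 2 - p) (Or.inl hy.ne')).const_mul 3).mul
    (hasDerivAt_kProfile_deriv2 hy.ne')).congr_deriv ?_
  have h₁ : y ^ (1 - p) * y ^ (p - 1) = 1 := by rw [← rpow_add hy]; simp
  have h₂ : y ^ (2 - p) * y ^ (p - 2) = 1 := by rw [← rpow_add hy]; simp
  rw [show 2 - p - 1 = 1 - p by ring]
  linear_combination 6 * p * (2 - p) * h₁ + 6 * p * (p - 1) * h₂

end kProfile

theorem Phi_derivative (p : ℝ) (hp : 2 ≤ p)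
    (k Φ : ℝ → ℝ)
    (hk : ∀ y : ℝ, k y = 1 - y ^ 2 + (2 / (p + 1)) * (y ^ (p + 1) - 1))
    (hΦ : ∀ y : ℝ, Φ y =
      3 * y ^ (2 - p) * (2 * (p * y ^ (p - 1) - 1)) * (∫ t in (1 : ℝ)..y, t ^ (p - 2) * k t)
        - k y * (2 * (y ^ p - y))) :
    ∀ y : ℝ, 0 < y →
      HasDerivAt Φ ((6 * (p - 2) * y ^ (1 - p) + 2 * p * (2 * p + 1)) *
        ∫ t in (1 : ℝ)..y, t ^ (p - 2) * k t) y := by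
  intro y hy
  obtain rfl : k = kProfile p := funext hk
  obtain rfl : Φ = _ := funext hΦ
  have hp' : p ≠ -1 := by linarith
  have hI : HasDerivAt (fun y => ∫ t in (1 : ℝ)..y, t ^ (p - 2) * kProfile p t)
      (y ^ (p - 2) * kProfile p y) y :=
    hasDerivAt_integral_of_continuousOn isOpen_Ioi (continuousOn_rpow_mul_kProfile hp')
      (uIcc_one_subset_Ioi_zero hy)
  refine (((hasDerivAt_rpow_mul_kProfile_deriv2 hy).mul hI).sub
    ((hasDerivAt_kProfile hp' hy.ne').mul (hasDerivAt_kProfile_deriv hy.ne'))).congr_deriv ?_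
  have hcancel : y ^ (2 - p) * y ^ (p - 2) = 1 := by rw [← rpow_add hy]; simp
  linear_combination two_mul_kProfile_mul_sub_sq hp' hy
    + 3 * kProfile p y * (2 * (p * y ^ (p - 1) - 1)) * hcancel
end

section
/- For p ≥ 2, the function Φ(y) = 3 y^{2−p} k''(y) ∫₁^y t^{p-2} k(t) dt − k(y) k'(y) satisfies Φ(1) = 0, Φ'(y) > 0 for y ∈ (1, ((p+1)/2)^{1/(p-1)}), Φ'(y) < 0 for y ∈ (0,1), and hence Φ(y) > 0 for all y ∈ (0, ((p+1)/2)^{1/(p-1)}] with y ≠ 1. -/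
open Real Set intervalIntegral

/-!
Write `I(y) = ∫₁^y t^(p-2) k(t) dt` and `G = 2 k k'' - k'²`. Since `k(1) = 0` and
`k' = 2 (y^p - y)` has the sign of `y - 1`, `k > 0` away from `1`, so `I` and `G` (whose
derivative is `2 k k''' = 4 p (p - 1) y^(p-2) k`) are increasing through `0` at `y = 1`.
Differentiating, `Φ' = 6 (p + (p - 2) y^(1-p)) I + G`, and for `p ≥ 2` the coefficient of `I`
is positive, so `Φ'` has the sign of `y - 1`; as `Φ(1) = 0`, `Φ > 0` on `(0, ∞) \ {1}`.
-/

theorem lt_of_hasDerivAt_pos {f f' : ℝ → ℝ} {x y : ℝ} (hxy : x < y)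
    (hf : ∀ z ∈ Icc x y, HasDerivAt f (f' z) z) (hf' : ∀ z ∈ Ioo x y, 0 < f' z) : f x < f y := by
  refine strictMonoOn_of_hasDerivWithinAt_pos (convex_Icc x y)
    (fun z hz ↦ (hf z hz).continuousAt.continuousWithinAt) (fun z hz ↦ ?_) (by rwa [interior_Icc])
    (left_mem_Icc.2 hxy.le) (right_mem_Icc.2 hxy.le) hxy
  rw [interior_Icc] at hz ⊢
  exact (hf z (Ioo_subset_Icc_self hz)).hasDerivWithinAt

theorem pos_of_hasDerivAt_neg_pos {f f' : ℝ → ℝ} {a c x : ℝ} (hac : a < c)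
    (hf : ∀ z, a < z → HasDerivAt f (f' z) z) (hc : f c = 0)
    (hneg : ∀ z ∈ Ioo a c, f' z < 0) (hpos : ∀ z, c < z → 0 < f' z) (hx : a < x) (hxc : x ≠ c) :
    0 < f x := by
  rcases hxc.lt_or_gt with hlt | hgt
  · have := lt_of_hasDerivAt_pos (f := -f) (f' := -f') hlt
      (fun z hz ↦ (hf z (hx.trans_le hz.1)).neg)
      (fun z hz ↦ neg_pos.2 (hneg z ⟨hx.trans hz.1, hz.2⟩))
    simpa [hc] using this
  · simpa [hc] using lt_of_hasDerivAt_pos hgt (fun z hz ↦ hf z (hac.trans_le hz.1))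
      (fun z hz ↦ hpos z hz.1)

namespace PhiSign

variable {p y : ℝ}

noncomputable def k (p y : ℝ) : ℝ := 1 - y ^ 2 + (2 / (p + 1)) * (y ^ (p + 1) - 1)

noncomputable def I (p y : ℝ) : ℝ := ∫ t in (1 : ℝ)..y, t ^ (p - 2) * k p t

noncomputable def G (p y : ℝ) : ℝ := 4 * (p * y ^ (p - 1) - 1) * k p y - 4 * (y ^ p - y) ^ 2

noncomputable def Φ (p y : ℝ) : ℝ :=
  3 * y ^ (2 - p) * (2 * (p * y ^ (p - 1) - 1)) * I p y - k p y * (2 * (y ^ p - y))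

theorem k_one : k p 1 = 0 := by simp [k]

theorem hasDerivAt_k (hp : 0 < p + 1) (hy : 0 < y) : HasDerivAt (k p) (2 * (y ^ p - y)) y := by
  have h := ((hasDerivAt_const y (1 : ℝ)).sub (hasDerivAt_pow 2 y)).add
    (((hasDerivAt_rpow_const (p := p + 1) (Or.inl hy.ne')).sub_const 1).const_mul (2 / (p + 1)))
  refine h.congr_deriv ?_
  rw [add_sub_cancel_right]
  field_simp
  ring

theorem k_pos (hp : 1 < p) (hy : 0 < y) (hy1 : y ≠ 1) : 0 < k p y :=
  pos_of_hasDerivAt_neg_pos one_pos (fun z hz ↦ hasDerivAt_k (by linarith) hz) k_one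
    (fun z hz ↦ by linarith [rpow_lt_self_of_lt_one hz.1 hz.2 hp])
    (fun z hz ↦ by linarith [self_lt_rpow_of_one_lt hz hp]) hy hy1

theorem continuousOn_integrand (hp : 0 < p + 1) :
    ContinuousOn (fun t ↦ t ^ (p - 2) * k p t) (Ioi 0) := fun t ht ↦
  ((continuousAt_rpow_const t _ (Or.inl (ne_of_gt ht))).mul
    (hasDerivAt_k hp ht).continuousAt).continuousWithinAt

theorem hasDerivAt_I (hp : 0 < p + 1) (hy : 0 < y) :
    HasDerivAt (I p) (y ^ (p - 2) * k p y) y := by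
  have hsub : uIcc 1 y ⊆ Ioi 0 := fun t ht ↦ (lt_min one_pos hy).trans_le ht.1
  exact integral_hasDerivAt_right ((continuousOn_integrand hp).mono hsub).intervalIntegrable
    ((continuousOn_integrand hp).stronglyMeasurableAtFilter isOpen_Ioi y hy)
    ((continuousOn_integrand hp).continuousAt (isOpen_Ioi.mem_nhds hy))

theorem I_one : I p 1 = 0 := integral_same

theorem I_neg (hp : 1 < p) (hy : 0 < y) (hy1 : y < 1) : I p y < 0 := by
  simpa [I_one] using lt_of_hasDerivAt_pos hy1
    (fun z hz ↦ hasDerivAt_I (by linarith) (hy.trans_le hz.1))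
    (fun z hz ↦ mul_pos (rpow_pos_of_pos (hy.trans hz.1) _) (k_pos hp (hy.trans hz.1) hz.2.ne))

theorem I_pos (hp : 1 < p) (hy : 1 < y) : 0 < I p y := by
  simpa [I_one] using lt_of_hasDerivAt_pos hy
    (fun z hz ↦ hasDerivAt_I (by linarith) (one_pos.trans_le hz.1))
    (fun z hz ↦ mul_pos (rpow_pos_of_pos (one_pos.trans hz.1) _)
      (k_pos hp (one_pos.trans hz.1) hz.1.ne'))

theorem hasDerivAt_G (hp : 0 < p + 1) (hy : 0 < y) :
    HasDerivAt (G p) (4 * p * (p - 1) * y ^ (p - 2) * k p y) y := by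
  have h1 := (((hasDerivAt_rpow_const (p := p - 1) (Or.inl hy.ne')).const_mul p).sub_const
    1).const_mul 4
  have h2 := (((hasDerivAt_rpow_const (p := p) (Or.inl hy.ne')).sub
    (hasDerivAt_id y)).pow 2).const_mul 4
  refine ((h1.mul (hasDerivAt_k hp hy)).sub h2).congr_deriv ?_
  rw [show p - 1 - 1 = p - 2 by ring]
  simp only [Pi.sub_apply, id]
  ring

theorem G_one : G p 1 = 0 := by simp [G, k_one]

theorem G_deriv_pos (hp : 1 < p) (hy : 0 < y) (hy1 : y ≠ 1) :
    0 < 4 * p * (p - 1) * y ^ (p - 2) * k p y := by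
  have := rpow_pos_of_pos hy (p - 2)
  have := k_pos hp hy hy1
  have : 0 < p - 1 := by linarith
  positivity

theorem G_neg (hp : 1 < p) (hy : 0 < y) (hy1 : y < 1) : G p y < 0 := by
  simpa [G_one] using lt_of_hasDerivAt_pos hy1
    (fun z hz ↦ hasDerivAt_G (by linarith) (hy.trans_le hz.1))
    (fun z hz ↦ G_deriv_pos hp (hy.trans hz.1) hz.2.ne)

theorem G_pos (hp : 1 < p) (hy : 1 < y) : 0 < G p y := by
  simpa [G_one] using lt_of_hasDerivAt_pos hy
    (fun z hz ↦ hasDerivAt_G (by linarith) (one_pos.trans_le hz.1))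
    (fun z hz ↦ G_deriv_pos hp (one_pos.trans hz.1) hz.1.ne')

theorem Φ_one : Φ p 1 = 0 := by simp [Φ, I_one, k_one]

theorem Φ_eq (hy : 0 < y) :
    Φ p y = 6 * (p * y - y ^ (2 - p)) * I p y - k p y * (2 * (y ^ p - y)) := by
  have h : y ^ (2 - p) * y ^ (p - 1) = y := by rw [← rpow_add hy]; norm_num
  rw [Φ]
  linear_combination (6 * p * I p y) * h

theorem hasDerivAt_Φ (hp : 0 < p + 1) (hy : 0 < y) :
    HasDerivAt (Φ p) (6 * (p + (p - 2) * y ^ (1 - p)) * I p y + G p y) y := by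
  have hA := (((hasDerivAt_id y).const_mul p).sub
    (hasDerivAt_rpow_const (p := 2 - p) (Or.inl hy.ne'))).const_mul 6
  have hB := ((hasDerivAt_rpow_const (p := p) (Or.inl hy.ne')).sub (hasDerivAt_id y)).const_mul 2
  have h := (hA.mul (hasDerivAt_I hp hy)).sub ((hasDerivAt_k hp hy).mul hB)
  have e1 : y ^ (2 - p) * y ^ (p - 2) = 1 := by rw [← rpow_add hy]; norm_num
  have e2 : y * y ^ (p - 2) = y ^ (p - 1) := by
    rw [show p - 1 = 1 + (p - 2) by ring, rpow_add hy, rpow_one]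
  refine (h.congr_deriv ?_).congr_of_eventuallyEq ?_
  · rw [show 2 - p - 1 = 1 - p by ring, G]
    simp only [Pi.sub_apply, id, mul_one]
    linear_combination (6 * p * k p y) * e2 - (6 * k p y) * e1
  · filter_upwards [isOpen_Ioi.mem_nhds hy] with z hz
    exact Φ_eq hz

theorem deriv_Φ_eq (hp : 0 < p + 1) (hy : 0 < y) :
    deriv (Φ p) y = 6 * (p + (p - 2) * y ^ (1 - p)) * I p y + G p y :=
  (hasDerivAt_Φ hp hy).deriv

theorem deriv_Φ_coeff_pos (hp : 2 ≤ p) (hy : 0 < y) : 0 < 6 * (p + (p - 2) * y ^ (1 - p)) := by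
  have := mul_nonneg (sub_nonneg.2 hp) (rpow_pos_of_pos hy (1 - p)).le
  linarith

theorem deriv_Φ_pos (hp : 2 ≤ p) (hy : 1 < y) : 0 < deriv (Φ p) y := by
  have hp1 : 1 < p := by linarith
  rw [deriv_Φ_eq (by linarith) (by linarith)]
  have := mul_pos (deriv_Φ_coeff_pos hp (by linarith)) (I_pos hp1 hy)
  linarith [G_pos hp1 hy]

theorem deriv_Φ_neg (hp : 2 ≤ p) (hy : 0 < y) (hy1 : y < 1) : deriv (Φ p) y < 0 := by
  have hp1 : 1 < p := by linarith
  rw [deriv_Φ_eq (by linarith) hy]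
  have := mul_neg_of_pos_of_neg (deriv_Φ_coeff_pos hp hy) (I_neg hp1 hy hy1)
  linarith [G_neg hp1 hy hy1]

theorem Φ_pos (hp : 2 ≤ p) (hy : 0 < y) (hy1 : y ≠ 1) : 0 < Φ p y :=
  pos_of_hasDerivAt_neg_pos one_pos
    (fun z hz ↦ (hasDerivAt_Φ (by linarith) hz).differentiableAt.hasDerivAt) Φ_one
    (fun z hz ↦ deriv_Φ_neg hp hz.1 hz.2) (fun z hz ↦ deriv_Φ_pos hp hz) hy hy1

end PhiSign

theorem Phi_positive_p_ge_two (p : ℝ) (hp : 2 ≤ p)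
    (k Φ : ℝ → ℝ)
    (hk : ∀ y : ℝ, k y = 1 - y ^ 2 + (2 / (p + 1)) * (y ^ (p + 1) - 1))
    (hΦ : ∀ y : ℝ, Φ y =
      3 * y ^ (2 - p) * (2 * (p * y ^ (p - 1) - 1)) * (∫ t in (1 : ℝ)..y, t ^ (p - 2) * k t)
        - k y * (2 * (y ^ p - y))) :
    Φ 1 = 0 ∧
    (∀ y ∈ Ioo (1 : ℝ) (((p + 1) / 2) ^ (1 / (p - 1))), 0 < deriv Φ y) ∧
    (∀ y ∈ Ioo (0 : ℝ) 1, deriv Φ y < 0) ∧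
    (∀ y ∈ Ioc (0 : ℝ) (((p + 1) / 2) ^ (1 / (p - 1))), y ≠ 1 → 0 < Φ y) := by
  obtain rfl : k = PhiSign.k p := funext hk
  obtain rfl : Φ = PhiSign.Φ p := funext hΦ
  exact ⟨PhiSign.Φ_one, fun y hy ↦ PhiSign.deriv_Φ_pos hp hy.1,
    fun y hy ↦ PhiSign.deriv_Φ_neg hp hy.1 hy.2, fun y hy hy1 ↦ PhiSign.Φ_pos hp hy.1 hy1⟩
end

section
/- For 1 < p < 2, with Φ(y) = 3 y^{2−p} k''(y) ∫₁^y t^{p-2} k(t) dt − k(y) k'(y), the identity (y^{p-2} Φ(y))' = 10 p(p−1) y^{p-2} ∫₁^y t^{p-2} k(t) dt + (2−p) y^{p-3} k(y) k'(y) holds for y > 0, and consequently Φ(y) > 0 for y ∈ (0, ((p+1)/2)^{1/(p-1)}] with y ≠ 1. -/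
/-!
Since `(2 k k'' - k'²)' = 2 k k''' = 4p(p-1) y^(p-2) k` and `2 k k'' - k'²` vanishes at `1`,
the integral `∫₁^y t^(p-2) k(t) dt` equals `(2 k k'' - k'²) / (4p(p-1))`; with this closed form the
derivative of `y^(p-2) Φ` is a direct computation. For positivity: `k' = 2(y^p - y)` and the
integral both have the sign of `y - 1`, and `k > 0`, so `(y^(p-2) Φ)'` has the sign of `y - 1` too.
As `y^(p-2) Φ` vanishes at `1`, it is positive on both sides of `1`.
-/

open Real Set intervalIntegral
open scoped Topology

theorem pos_of_hasDerivAt_of_sub_mul_pos {f f' : ℝ → ℝ} {a c : ℝ} (hac : a < c)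
    (hf : ∀ x ∈ Ioi a, HasDerivAt f (f' x) x) (hfc : f c = 0)
    (hf' : ∀ x ∈ Ioi a, x ≠ c → 0 < (x - c) * f' x) {y : ℝ} (hy : a < y) (hyc : y ≠ c) :
    0 < f y := by
  have hcont : ∀ s ⊆ Ioi a, ContinuousOn f s := fun s hs x hx =>
    (hf x (hs hx)).continuousAt.continuousWithinAt
  rcases hyc.lt_or_gt with hlt | hgt
  · have hanti : StrictAntiOn f (Icc y c) := by
      refine strictAntiOn_of_hasDerivWithinAt_neg (convex_Icc y c)
        (hcont _ fun x hx => hy.trans_le hx.1) (fun x hx => (hf x ?_).hasDerivWithinAt) ?_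
      · rw [interior_Icc] at hx; exact hy.trans hx.1
      · intro x hx
        rw [interior_Icc] at hx
        have := hf' x (hy.trans hx.1) hx.2.ne
        nlinarith [hx.2]
    simpa [hfc] using hanti (left_mem_Icc.2 hlt.le) (right_mem_Icc.2 hlt.le) hlt
  · have hmono : StrictMonoOn f (Icc c y) := by
      refine strictMonoOn_of_hasDerivWithinAt_pos (convex_Icc c y)
        (hcont _ fun x hx => hac.trans_le hx.1) (fun x hx => (hf x ?_).hasDerivWithinAt) ?_
      · rw [interior_Icc] at hx; exact hac.trans hx.1
      · intro x hx
        rw [interior_Icc] at hx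
        have := hf' x (hac.trans hx.1) hx.1.ne'
        nlinarith [hx.1]
    simpa [hfc] using hmono (left_mem_Icc.2 hgt.le) (right_mem_Icc.2 hgt.le) hgt

theorem sub_one_mul_rpow_sub_self_pos {p y : ℝ} (hp : 1 < p) (hy : 0 < y) (hy1 : y ≠ 1) :
    0 < (y - 1) * (y ^ p - y) := by
  have hsplit : y ^ p - y = y * (y ^ (p - 1) - 1) := by
    rw [mul_sub, ← rpow_one_add' hy.le (by linarith)]; ring_nf
  rw [hsplit]
  rcases hy1.lt_or_gt with hlt | hgt
  · have := rpow_lt_one hy.le hlt (sub_pos.2 hp)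
    nlinarith [mul_pos_of_neg_of_neg (sub_neg.2 hlt) (sub_neg.2 this)]
  · have := one_lt_rpow hgt (sub_pos.2 hp)
    nlinarith [mul_pos (sub_pos.2 hgt) (sub_pos.2 this)]

namespace PhiPositivity

variable (p : ℝ)

noncomputable def k (y : ℝ) : ℝ := 1 - y ^ 2 + (2 / (p + 1)) * (y ^ (p + 1) - 1)

noncomputable def k' (y : ℝ) : ℝ := 2 * (y ^ p - y)

noncomputable def k'' (y : ℝ) : ℝ := 2 * (p * y ^ (p - 1) - 1)

noncomputable def F (y : ℝ) : ℝ := ∫ t in (1 : ℝ)..y, t ^ (p - 2) * k p t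

noncomputable def Φ (y : ℝ) : ℝ := 3 * y ^ (2 - p) * k'' p y * F p y - k p y * k' p y

noncomputable def W (y : ℝ) : ℝ := 2 * k p y * k'' p y - k' p y ^ 2

variable {p}

theorem hasDerivAt_k (hp : p + 1 ≠ 0) {y : ℝ} (hy : y ≠ 0) : HasDerivAt (k p) (k' p y) y := by
  refine (((hasDerivAt_pow 2 y).const_sub 1).add (((hasDerivAt_rpow_const (p := p + 1)
    (Or.inl hy)).sub_const 1).const_mul (2 / (p + 1)))).congr_deriv ?_
  rw [k', add_sub_cancel_right]
  field_simp
  ring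

theorem hasDerivAt_k' {y : ℝ} (hy : y ≠ 0) : HasDerivAt (k' p) (k'' p y) y :=
  ((hasDerivAt_rpow_const (Or.inl hy)).sub (hasDerivAt_id' y)).const_mul 2

theorem hasDerivAt_k'' {y : ℝ} (hy : y ≠ 0) :
    HasDerivAt (k'' p) (2 * p * (p - 1) * y ^ (p - 2)) y := by
  refine ((((hasDerivAt_rpow_const (p := p - 1) (Or.inl hy)).const_mul p).sub_const 1).const_mul
    2).congr_deriv ?_
  rw [sub_sub, one_add_one_eq_two]
  ring

theorem hasDerivAt_W (hp : p + 1 ≠ 0) {y : ℝ} (hy : y ≠ 0) :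
    HasDerivAt (W p) (4 * p * (p - 1) * (y ^ (p - 2) * k p y)) y := by
  refine ((((hasDerivAt_k hp hy).const_mul 2).mul (hasDerivAt_k'' hy)).sub
    ((hasDerivAt_k' hy).pow 2)).congr_deriv ?_
  push_cast
  ring

theorem W_one : W p 1 = 0 := by
  simp [W, k, k']

theorem intervalIntegrable_rpow_mul_k (hp : p + 1 ≠ 0) {a b : ℝ} (ha : 0 < a) (hb : 0 < b) :
    IntervalIntegrable (fun t => t ^ (p - 2) * k p t) MeasureTheory.volume a b :=
  ContinuousOn.intervalIntegrable fun t ht =>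
    have ht0 : t ≠ 0 := ne_of_gt (ordConnected_Ioi.uIcc_subset ha hb ht)
    ((continuousAt_rpow_const t _ (Or.inl ht0)).mul
      (hasDerivAt_k hp ht0).continuousAt).continuousWithinAt

theorem mul_F_eq_W (hp : p + 1 ≠ 0) {y : ℝ} (hy : 0 < y) : 4 * p * (p - 1) * F p y = W p y := by
  rw [F, ← integral_const_mul, integral_eq_sub_of_hasDerivAt
    (fun t ht => hasDerivAt_W hp (ne_of_gt (ordConnected_Ioi.uIcc_subset one_pos hy ht)))
    ((intervalIntegrable_rpow_mul_k hp one_pos hy).const_mul _), W_one, sub_zero]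

theorem hasDerivAt_rpow_mul_Φ (hp : 0 < p) (hp1 : p ≠ 1) {y : ℝ} (hy : 0 < y) :
    HasDerivAt (fun z => z ^ (p - 2) * Φ p z)
      (10 * p * (p - 1) * y ^ (p - 2) * F p y + (2 - p) * y ^ (p - 3) * k p y * k' p y) y := by
  have hp' : p + 1 ≠ 0 := by positivity
  have hc : 4 * p * (p - 1) ≠ 0 := by have := sub_ne_zero.2 hp1; positivity
  have heq : (fun z => z ^ (p - 2) * Φ p z) =ᶠ[𝓝 y]
      fun z => 3 * k'' p z * W p z / (4 * p * (p - 1)) - z ^ (p - 2) * (k p z * k' p z) := by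
    filter_upwards [Ioi_mem_nhds hy] with z hz
    have hz1 : z ^ (p - 2) * z ^ (2 - p) = 1 := by rw [← rpow_add hz]; simp
    rw [Φ, ← mul_F_eq_W hp' hz, mul_div_assoc, mul_div_cancel_left₀ _ hc]
    linear_combination 3 * k'' p z * F p z * hz1
  refine (((((hasDerivAt_k'' hy.ne').const_mul 3).mul (hasDerivAt_W hp' hy.ne')).div_const _).sub
    ((hasDerivAt_rpow_const (Or.inl hy.ne')).mul ((hasDerivAt_k hp' hy.ne').mul
      (hasDerivAt_k' hy.ne')))).congr_deriv ?_ |>.congr_of_eventuallyEq heq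
  rw [eq_div_of_mul_eq hc ((mul_comm _ _).trans (mul_F_eq_W hp' hy)), W, sub_sub,
    show (2 : ℝ) + 1 = 3 by norm_num, Pi.mul_apply]
  field_simp
  ring

theorem sub_one_mul_k'_pos (hp : 1 < p) {y : ℝ} (hy : 0 < y) (hy1 : y ≠ 1) :
    0 < (y - 1) * k' p y := by
  rw [k', mul_left_comm]
  exact mul_pos two_pos (sub_one_mul_rpow_sub_self_pos hp hy hy1)

theorem k_pos (hp : 1 < p) {y : ℝ} (hy : 0 < y) (hy1 : y ≠ 1) : 0 < k p y :=
  pos_of_hasDerivAt_of_sub_mul_pos zero_lt_one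
    (fun _ hx => hasDerivAt_k (by linarith) (ne_of_gt hx))
    (by simp [k]) (fun _ hx hx1 => sub_one_mul_k'_pos hp hx hx1) hy hy1

theorem sub_one_mul_F_pos (hp : 1 < p) {y : ℝ} (hy : 0 < y) (hy1 : y ≠ 1) :
    0 < (y - 1) * F p y := by
  have hp' : p + 1 ≠ 0 := by linarith
  have hpos : ∀ t, 0 < t → t ≠ 1 → 0 < t ^ (p - 2) * k p t := fun t ht ht1 =>
    mul_pos (rpow_pos_of_pos ht _) (k_pos hp ht ht1)
  rcases hy1.lt_or_gt with hlt | hgt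
  · rw [F, integral_symm]
    exact mul_pos_of_neg_of_neg (sub_neg.2 hlt) <| neg_neg_of_pos <|
      intervalIntegral_pos_of_pos_on (intervalIntegrable_rpow_mul_k hp' hy one_pos)
        (fun t ht => hpos t (hy.trans ht.1) ht.2.ne) hlt
  · exact mul_pos (sub_pos.2 hgt) <|
      intervalIntegral_pos_of_pos_on (intervalIntegrable_rpow_mul_k hp' one_pos hy)
        (fun t ht => hpos t (one_pos.trans ht.1) ht.1.ne') hgt

theorem Φ_pos (hp1 : 1 < p) (hp2 : p < 2) {y : ℝ} (hy : 0 < y) (hy1 : y ≠ 1) : 0 < Φ p y := by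
  refine pos_of_mul_pos_right (pos_of_hasDerivAt_of_sub_mul_pos zero_lt_one
    (fun x hx => hasDerivAt_rpow_mul_Φ (by linarith) hp1.ne' hx) (by simp [Φ, F, k, k'])
    (fun x (hx : 0 < x) hx1 => ?_) hy hy1) (rpow_pos_of_pos hy _).le
  calc 0 < 10 * p * (p - 1) * x ^ (p - 2) * ((x - 1) * F p x)
        + (2 - p) * x ^ (p - 3) * k p x * ((x - 1) * k' p x) := by
        have := sub_one_mul_F_pos hp1 hx hx1
        have := sub_one_mul_k'_pos hp1 hx hx1
        have := k_pos hp1 hx hx1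
        have : 0 < p - 1 := by linarith
        have : 0 < 2 - p := by linarith
        positivity
    _ = _ := by ring

end PhiPositivity

theorem Phi_positive_p_lt_two (p : ℝ) (hp1 : 1 < p) (hp2 : p < 2)
    (k Φ : ℝ → ℝ)
    (hk : ∀ y : ℝ, k y = 1 - y ^ 2 + (2 / (p + 1)) * (y ^ (p + 1) - 1))
    (hΦ : ∀ y : ℝ, Φ y =
      3 * y ^ (2 - p) * (2 * (p * y ^ (p - 1) - 1)) * (∫ t in (1 : ℝ)..y, t ^ (p - 2) * k t)
        - k y * (2 * (y ^ p - y))) :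
    (∀ y : ℝ, 0 < y →
      HasDerivAt (fun z : ℝ => z ^ (p - 2) * Φ z)
        (10 * p * (p - 1) * y ^ (p - 2) * (∫ t in (1 : ℝ)..y, t ^ (p - 2) * k t)
          + (2 - p) * y ^ (p - 3) * k y * (2 * (y ^ p - y))) y) ∧
    (∀ y ∈ Ioc (0 : ℝ) (((p + 1) / 2) ^ (1 / (p - 1))), y ≠ 1 → 0 < Φ y) := by
  obtain rfl : k = PhiPositivity.k p := funext hk
  obtain rfl : Φ = PhiPositivity.Φ p := funext hΦ
  exact ⟨fun y hy => PhiPositivity.hasDerivAt_rpow_mul_Φ (by linarith) hp1.ne' hy,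
    fun y hy hy1 => PhiPositivity.Φ_pos hp1 hp2 hy.1 hy1⟩
end

section
/- With k and Φ as above, Φ(y)/(k'(y))⁴ → (p+3)/(48(p−1)²) as y → 1. -/
open Real Set Filter intervalIntegral
open scoped Topology Nat

/-!
After computing the integral, `Φ` is, for `y > 0`, a linear combination of the powers
`y ^ p`, `y ^ (p + 2)`, `y ^ (2p + 1)`, `y ^ (2 - p)` plus a cubic polynomial. Since `Φ` vanishes
to fourth order at `1`, it equals the same combination of the third-order Taylor remainders of
these powers at `1`, so Taylor's theorem gives `Φ y / (y - 1) ^ 4 → (p + 3) (p - 1) ^ 2 / 3`.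
Dividing by `(k' y / (y - 1)) ^ 4 → (2 (p - 1)) ^ 4` gives the limit.
-/

noncomputable def rpowTaylor (b : ℝ) (n : ℕ) (y : ℝ) : ℝ :=
  ∑ k ∈ Finset.range n, (descPochhammer ℝ k).eval b / k ! * (y - 1) ^ k

theorem taylorWithinEval_rpow_const (b : ℝ) (n : ℕ) (y : ℝ) :
    taylorWithinEval (fun x : ℝ => x ^ b) n (Ioi 0) 1 y = rpowTaylor b (n + 1) y := by
  rw [taylor_within_apply, rpowTaylor]
  refine Finset.sum_congr rfl fun k _ => ?_
  rw [iteratedDerivWithin_of_isOpen_eq_iterate isOpen_Ioi (mem_Ioi.2 one_pos),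
    iter_deriv_rpow_const, one_rpow, smul_eq_mul]
  ring

theorem tendsto_rpow_sub_rpowTaylor_div_pow (b : ℝ) (n : ℕ) :
    Tendsto (fun y => (y ^ b - rpowTaylor b n y) / (y - 1) ^ n) (𝓝[≠] 1)
      (𝓝 ((descPochhammer ℝ n).eval b / n !)) := by
  have hf : ContDiffOn ℝ n (fun x : ℝ => x ^ b) (Ioi 0) :=
    fun x hx => (contDiffAt_rpow_const_of_ne (ne_of_gt hx)).contDiffWithinAt
  have h := Real.taylor_tendsto (convex_Ioi 0) (mem_Ioi.2 one_pos) hf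
  rw [nhdsWithin_eq_nhds.2 (Ioi_mem_nhds one_pos)] at h
  have h' := (h.mono_left (nhdsWithin_le_nhds (s := {1}ᶜ))).add_const
    ((descPochhammer ℝ n).eval b / n !)
  rw [zero_add] at h'
  refine h'.congr' ?_
  filter_upwards [self_mem_nhdsWithin] with y hy
  have hy : (y - 1) ^ n ≠ 0 := pow_ne_zero _ (sub_ne_zero.2 hy)
  rw [taylorWithinEval_rpow_const, rpowTaylor, Finset.sum_range_succ, ← rpowTaylor]
  field_simp
  ring

theorem integral_rpow_sub_two_mul_eq {p : ℝ} (hp : 1 < p) {k : ℝ → ℝ}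
    (hk : ∀ y : ℝ, k y = 1 - y ^ 2 + (2 / (p + 1)) * (y ^ (p + 1) - 1)) {y : ℝ} (hy : 0 < y) :
    ∫ t in (1 : ℝ)..y, t ^ (p - 2) * k t =
      (y ^ (p - 1) - 1) / (p + 1) - (y ^ (p + 1) - 1) / (p + 1)
        + (y ^ (2 * p) - 1) / (p * (p + 1)) := by
  have hp0 : p ≠ 0 := by linarith
  have hp1 : p + 1 ≠ 0 := by linarith
  have hpm1 : p - 1 ≠ 0 := by linarith
  have hexpand : EqOn (fun t : ℝ => t ^ (p - 2) * k t)
      (fun t : ℝ => (p - 1) / (p + 1) * t ^ (p - 2) - t ^ p + 2 / (p + 1) * t ^ (2 * p - 1))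
      (uIcc 1 y) := by
    intro t ht
    have ht0 : 0 < t := lt_of_lt_of_le (lt_min one_pos hy) ht.1
    have htp : t ^ p = t ^ (p - 2) * t ^ 2 := by
      rw [← rpow_natCast, ← rpow_add ht0]; norm_num
    have h2p : t ^ (2 * p - 1) = t ^ (p - 2) * t ^ (p + 1) := by
      rw [← rpow_add ht0]; ring_nf
    simp only [hk, htp, h2p]
    field_simp
    ring
  have hrpow {r : ℝ} (hr : -1 < r) :
      IntervalIntegrable (fun t : ℝ => t ^ r) MeasureTheory.volume 1 y :=
    intervalIntegrable_rpow' hr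
  rw [integral_congr hexpand,
    integral_add (((hrpow (by linarith)).const_mul _).sub (hrpow (by linarith)))
      ((hrpow (by linarith)).const_mul _),
    integral_sub ((hrpow (by linarith)).const_mul _) (hrpow (by linarith)),
    integral_const_mul, integral_const_mul,
    integral_rpow (Or.inl (by linarith : (-1 : ℝ) < p - 2)),
    integral_rpow (Or.inl (by linarith : (-1 : ℝ) < p)),
    integral_rpow (Or.inl (by linarith : (-1 : ℝ) < 2 * p - 1)),
    show p - 2 + 1 = p - 1 by ring, show 2 * p - 1 + 1 = 2 * p by ring, one_rpow, one_rpow,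
    one_rpow]
  field_simp

theorem Phi_eq_sum_rpow_sub_rpowTaylor {p : ℝ} (hp : 1 < p) {k Φ : ℝ → ℝ}
    (hk : ∀ y : ℝ, k y = 1 - y ^ 2 + (2 / (p + 1)) * (y ^ (p + 1) - 1))
    (hΦ : ∀ y : ℝ, Φ y =
      3 * y ^ (2 - p) * (2 * (p * y ^ (p - 1) - 1)) * (∫ t in (1 : ℝ)..y, t ^ (p - 2) * k t)
        - k y * (2 * (y ^ p - y))) {y : ℝ} (hy : 0 < y) :
    Φ y = (4 * p + 2) / (p + 1) * (y ^ p - rpowTaylor p 4 y)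
      + (-4 * p ^ 2 + 6 * p - 6) / (p * (p + 1)) * (y ^ (p + 2) - rpowTaylor (p + 2) 4 y)
      + 2 / (p + 1) * (y ^ (2 * p + 1) - rpowTaylor (2 * p + 1) 4 y)
      + 6 / (p * (p + 1)) * (y ^ (2 - p) - rpowTaylor (2 - p) 4 y) := by
  have hp0 : p ≠ 0 := by linarith
  have hp1 : p + 1 ≠ 0 := by linarith
  have hyp : y ^ p ≠ 0 := (rpow_pos_of_pos hy p).ne'
  have e1 : y ^ (p - 1) = y ^ p / y := by rw [rpow_sub hy, rpow_one]
  have e2 : y ^ (p + 1) = y ^ p * y := rpow_add_one hy.ne' p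
  have e3 : y ^ (p + 2) = y ^ p * y ^ 2 := by rw [← rpow_natCast, ← rpow_add hy]; norm_num
  have e4 : y ^ (2 * p) = y ^ p * y ^ p := by rw [two_mul, rpow_add hy]
  have e5 : y ^ (2 * p + 1) = y ^ p * y ^ p * y := by rw [rpow_add_one hy.ne', e4]
  have e6 : y ^ (2 - p) = y ^ 2 / y ^ p := by rw [rpow_sub hy, ← rpow_natCast]; norm_num
  rw [hΦ y, integral_rpow_sub_two_mul_eq hp hk hy, hk y, e1, e2, e3, e4, e5, e6]
  simp only [rpowTaylor, Finset.sum_range_succ, Finset.sum_range_zero, descPochhammer_succ_eval,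
    descPochhammer_zero, Polynomial.eval_one, Nat.factorial]
  field_simp
  ring

theorem tendsto_rpow_sub_self_div_sub_one (p : ℝ) :
    Tendsto (fun y : ℝ => (y ^ p - y) / (y - 1)) (𝓝[≠] 1) (𝓝 (p - 1)) := by
  have h := (tendsto_rpow_sub_rpowTaylor_div_pow p 1).sub_const 1
  simp only [rpowTaylor, descPochhammer_one, Polynomial.eval_X, Finset.sum_range_one,
    descPochhammer_zero, Polynomial.eval_one, Nat.factorial_zero, pow_one, pow_zero] at h
  refine (h.congr' ?_).trans (by norm_num)
  filter_upwards [self_mem_nhdsWithin] with y hy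
  have hy : y - 1 ≠ 0 := sub_ne_zero.2 hy
  field_simp
  ring

theorem tendsto_Phi_div_sub_one_pow_four {p : ℝ} (hp : 1 < p) {k Φ : ℝ → ℝ}
    (hk : ∀ y : ℝ, k y = 1 - y ^ 2 + (2 / (p + 1)) * (y ^ (p + 1) - 1))
    (hΦ : ∀ y : ℝ, Φ y =
      3 * y ^ (2 - p) * (2 * (p * y ^ (p - 1) - 1)) * (∫ t in (1 : ℝ)..y, t ^ (p - 2) * k t)
        - k y * (2 * (y ^ p - y))) :
    Tendsto (fun y => Φ y / (y - 1) ^ 4) (𝓝[≠] 1) (𝓝 ((p + 3) * (p - 1) ^ 2 / 3)) := by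
  have hp0 : p ≠ 0 := by linarith
  have hp1 : p + 1 ≠ 0 := by linarith
  have h := ((((tendsto_rpow_sub_rpowTaylor_div_pow p 4).const_mul ((4 * p + 2) / (p + 1))).add
    ((tendsto_rpow_sub_rpowTaylor_div_pow (p + 2) 4).const_mul
      ((-4 * p ^ 2 + 6 * p - 6) / (p * (p + 1))))).add
    ((tendsto_rpow_sub_rpowTaylor_div_pow (2 * p + 1) 4).const_mul (2 / (p + 1)))).add
    ((tendsto_rpow_sub_rpowTaylor_div_pow (2 - p) 4).const_mul (6 / (p * (p + 1))))
  simp only [descPochhammer_succ_eval, descPochhammer_zero, Polynomial.eval_one,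
    Nat.factorial] at h
  convert h.congr' ?_ using 2
  · push_cast
    field_simp
    ring
  · filter_upwards [eventually_nhdsWithin_of_eventually_nhds (eventually_gt_nhds one_pos)]
      with y hy
    rw [Phi_eq_sum_rpow_sub_rpowTaylor hp hk hΦ hy]
    ring

theorem Phi_over_k'_fourth_limit (p : ℝ) (hp : 1 < p)
    (k Φ : ℝ → ℝ)
    (hk : ∀ y : ℝ, k y = 1 - y ^ 2 + (2 / (p + 1)) * (y ^ (p + 1) - 1))
    (hΦ : ∀ y : ℝ, Φ y =
      3 * y ^ (2 - p) * (2 * (p * y ^ (p - 1) - 1)) * (∫ t in (1 : ℝ)..y, t ^ (p - 2) * k t)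
        - k y * (2 * (y ^ p - y))) :
    Tendsto (fun y : ℝ => Φ y / (2 * (y ^ p - y)) ^ 4)
      (nhdsWithin 1 {(1 : ℝ)}ᶜ) (nhds ((p + 3) / (48 * (p - 1) ^ 2))) := by
  have hpm1 : p - 1 ≠ 0 := by linarith
  have hk' := ((tendsto_rpow_sub_self_div_sub_one p).const_mul 2).pow 4
  have h := (tendsto_Phi_div_sub_one_pow_four hp hk hΦ).div hk' (by positivity)
  convert h.congr' ?_ using 2
  · field_simp
    ring
  · filter_upwards [self_mem_nhdsWithin] with y hy
    rw [Pi.div_apply, mul_div_assoc', div_pow,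
      div_div_div_cancel_right₀ (pow_ne_zero 4 (sub_ne_zero.2 hy))]
end

section
/- Let a(ξ) = −ξ² + (2/(p+1)) ξ^{p+1} on [1, ((p+1)/2)^{1/(p-1)}]. Then a is strictly increasing, maps this interval onto [(1−p)/(1+p), 0], and the inverse a^{-1} : [(1−p)/(1+p), 0] → [1, ((p+1)/2)^{1/(p-1)}] is ½-Hölder continuous: there is a constant C > 0 with |a^{-1}(c₁) − a^{-1}(c₂)| ≤ C √|c₁ − c₂| for all c₁, c₂ in [(1−p)/(1+p), 0]. -/
/-!
On `[1, ∞)` one has `a'(ξ) = 2ξ(ξ^(p-1) - 1) ≥ 2(p-1)(ξ-1)`, from `ξ^(p-1) ≥ 1 + (p-1) log ξ` and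
`ξ log ξ ≥ ξ - 1`. Integrating, `a y - a x ≥ (p-1)((y-1)² - (x-1)²) ≥ (p-1)(y-x)²` for `1 ≤ x ≤ y`.
This quadratic growth gives strict monotonicity and the ½-Hölder bound with `C = (p-1)^(-1/2)`;
the image is then `[a 1, a b]` by continuity, and `a 1 = (1-p)/(1+p)`, `a b = 0` for
`b = ((p+1)/2)^(1/(p-1))`.
-/

open Real Set

noncomputable def negSqAddRpow (p ξ : ℝ) : ℝ := -ξ ^ 2 + (2 / (p + 1)) * ξ ^ (p + 1)

section QuadraticGrowth

variable {f : ℝ → ℝ} {s : Set ℝ} {k : ℝ}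

theorem strictMonoOn_of_mul_sq_le_sub (hk : 0 < k)
    (hf : ∀ x ∈ s, ∀ y ∈ s, x ≤ y → k * (y - x) ^ 2 ≤ f y - f x) : StrictMonoOn f s :=
  fun x hx y hy hxy => by nlinarith [hf x hx y hy hxy.le, mul_pos hk (pow_pos (sub_pos.2 hxy) 2)]

theorem abs_sub_le_of_mul_sq_le_sub (hk : 0 < k)
    (hf : ∀ x ∈ s, ∀ y ∈ s, x ≤ y → k * (y - x) ^ 2 ≤ f y - f x) {x y : ℝ} (hx : x ∈ s)
    (hy : y ∈ s) : |x - y| ≤ (√k)⁻¹ * √|f x - f y| := by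
  have hsq : k * (x - y) ^ 2 ≤ |f x - f y| := by
    rcases le_total x y with hxy | hyx
    · rw [abs_sub_comm, ← neg_sub y x, neg_sq]
      exact (hf x hx y hy hxy).trans (le_abs_self _)
    · exact (hf y hy x hx hyx).trans (le_abs_self _)
  rw [le_inv_mul_iff₀ (sqrt_pos.2 hk), ← sqrt_sq_eq_abs, ← sqrt_mul hk.le]
  exact sqrt_le_sqrt hsq

end QuadraticGrowth

theorem mul_sub_one_le_mul_rpow_sub_one {x q : ℝ} (hx : 0 < x) (hq : 0 ≤ q) :
    q * (x - 1) ≤ x * (x ^ q - 1) := by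
  have hexp : 1 + q * log x ≤ x ^ q := by
    rw [rpow_def_of_pos hx, mul_comm q]
    linarith [add_one_le_exp (log x * q)]
  calc q * (x - 1) ≤ q * (x * log x) :=
        mul_le_mul_of_nonneg_left (self_sub_one_le_mul_log hx.le) hq
    _ = x * (q * log x) := by ring
    _ ≤ x * (x ^ q - 1) := mul_le_mul_of_nonneg_left (by linarith) hx.le

namespace negSqAddRpow

variable {p : ℝ}

theorem hasDerivAt (hp : p + 1 ≠ 0) {x : ℝ} (hx : x ≠ 0) :
    HasDerivAt (negSqAddRpow p) (2 * x ^ p - 2 * x) x := by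
  have h := ((hasDerivAt_pow 2 x).neg.add
    ((hasDerivAt_rpow_const (p := p + 1) (Or.inl hx)).const_mul (2 / (p + 1))))
  refine h.congr_deriv ?_
  rw [add_sub_cancel_right]
  field_simp
  norm_num
  ring

theorem continuous (hp : -1 ≤ p) : Continuous (negSqAddRpow p) :=
  ((continuous_pow 2).neg).add (continuous_const.mul (continuous_rpow_const (by linarith)))

theorem apply_one (hp : p + 1 ≠ 0) : negSqAddRpow p 1 = (1 - p) / (1 + p) := by
  have : 1 + p ≠ 0 := by rwa [add_comm]
  rw [negSqAddRpow, one_rpow]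
  field_simp
  ring

theorem apply_rpow_one_div_eq_zero (hp : 1 < p) :
    negSqAddRpow p (((p + 1) / 2) ^ (1 / (p - 1))) = 0 := by
  set b := ((p + 1) / 2) ^ (1 / (p - 1))
  have hb : 0 < b := by positivity
  have hbp : b ^ (p - 1) = (p + 1) / 2 := by
    rw [← rpow_mul (by positivity), one_div_mul_cancel (by linarith), rpow_one]
  have hbp2 : b ^ (p + 1) = b ^ 2 * ((p + 1) / 2) := by
    rw [show p + 1 = 2 + (p - 1) by ring, rpow_add hb, hbp, rpow_two]
    ring
  have : p + 1 ≠ 0 := by linarith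
  rw [negSqAddRpow, hbp2]
  field_simp
  ring

theorem monotoneOn_sub_sq (hp : 1 ≤ p) :
    MonotoneOn (fun ξ => negSqAddRpow p ξ - (p - 1) * (ξ - 1) ^ 2) (Ici 1) := by
  have hderiv : ∀ x ∈ Ioi (1 : ℝ),
      HasDerivAt (fun ξ => negSqAddRpow p ξ - (p - 1) * (ξ - 1) ^ 2)
        (2 * (x * (x ^ (p - 1) - 1) - (p - 1) * (x - 1))) x := by
    intro x hx
    have hx0 : x ≠ 0 := (zero_lt_one.trans hx).ne'
    refine ((hasDerivAt (by linarith) hx0).sub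
      ((((hasDerivAt_id x).sub_const 1).pow 2).const_mul (p - 1))).congr_deriv ?_
    rw [rpow_sub_one hx0]
    field_simp
    norm_num
    ring
  refine monotoneOn_of_deriv_nonneg (convex_Ici 1)
    ((continuous (by linarith)).continuousOn.sub (by fun_prop)) (fun x hx => ?_) (fun x hx => ?_)
  all_goals rw [interior_Ici] at hx
  · exact (hderiv x hx).differentiableAt.differentiableWithinAt
  · rw [(hderiv x hx).deriv]
    linarith [mul_sub_one_le_mul_rpow_sub_one (zero_lt_one.trans hx) (sub_nonneg.2 hp)]

theorem mul_sq_le_sub (hp : 1 ≤ p) {x y : ℝ} (hx : 1 ≤ x) (hxy : x ≤ y) :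
    (p - 1) * (y - x) ^ 2 ≤ negSqAddRpow p y - negSqAddRpow p x := by
  have h := monotoneOn_sub_sq hp hx (hx.trans hxy) hxy
  simp only at h
  nlinarith [mul_nonneg (sub_nonneg.2 hp) (mul_nonneg (sub_nonneg.2 hx) (sub_nonneg.2 hxy))]

end negSqAddRpow

theorem a_inverse_holder (p : ℝ) (hp : 1 < p)
    (a : ℝ → ℝ) (ha : ∀ ξ : ℝ, a ξ = -ξ ^ 2 + (2 / (p + 1)) * ξ ^ (p + 1)) :
    StrictMonoOn a (Icc (1 : ℝ) (((p + 1) / 2) ^ (1 / (p - 1)))) ∧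
    a '' Icc (1 : ℝ) (((p + 1) / 2) ^ (1 / (p - 1))) = Icc ((1 - p) / (1 + p)) 0 ∧
    ∃ C : ℝ, 0 < C ∧
      ∀ ξ₁ ∈ Icc (1 : ℝ) (((p + 1) / 2) ^ (1 / (p - 1))),
      ∀ ξ₂ ∈ Icc (1 : ℝ) (((p + 1) / 2) ^ (1 / (p - 1))),
        |ξ₁ - ξ₂| ≤ C * Real.sqrt |a ξ₁ - a ξ₂| := by
  obtain rfl : a = negSqAddRpow p := funext ha
  set b := ((p + 1) / 2) ^ (1 / (p - 1))
  have hk : 0 < p - 1 := by linarith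
  have hb : 1 ≤ b := one_le_rpow (by linarith) (by positivity)
  have hgrowth : ∀ x ∈ Icc 1 b, ∀ y ∈ Icc 1 b, x ≤ y →
      (p - 1) * (y - x) ^ 2 ≤ negSqAddRpow p y - negSqAddRpow p x := fun x hx _ _ =>
    negSqAddRpow.mul_sq_le_sub hp.le hx.1
  have hmono := strictMonoOn_of_mul_sq_le_sub hk hgrowth
  refine ⟨hmono, ?_, (√(p - 1))⁻¹, by positivity, fun ξ₁ h₁ ξ₂ h₂ =>
    abs_sub_le_of_mul_sq_le_sub hk hgrowth h₁ h₂⟩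
  rw [(negSqAddRpow.continuous (by linarith)).continuousOn.image_Icc_of_monotoneOn hb
    hmono.monotoneOn, negSqAddRpow.apply_one (by linarith),
    negSqAddRpow.apply_rpow_one_div_eq_zero hp]
end
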